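/- arXiv:1309.4748 — 2 statements merged into one kernel-verified Lean document; each statement's English description precedes it below -/
import Mathlib

section
/- Let $K$ be a totally real number field of degree $d \geq 2$ that is Galois over $\mathbb{Q}$ with Galois group $G$. Let $\mathbf{s} = (s_\tau)_{\tau \in G}$ be a tuple with each $s_\tau \in \{0, 12\}$, which is not constantly $0$ and not constantly $12$. Then there exists a unit $\epsilon$ of the ring of integers of $K$ such that $\prod_{\tau \in G} \tau(\epsilon)^{s_\tau} \neq 1$. -/
open NumberField

/-!
Fix a real place `w₀` of `K`. Since real places have trivial stabilizer, the places `τ⁻¹ • w₀`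
are pairwise distinct, and `w₀ (τ ε) = (τ⁻¹ • w₀) ε`. Pick `τ₁` with `s τ₁ = 0`; Dirichlet's unit
theorem yields a unit `ε` with `w ε < 1` at every place `w ≠ τ₁⁻¹ • w₀`. Every factor of
`w₀ (∏ τ ε ^ s τ)` is then at most `1`, and the factor at a `τ₂` with `s τ₂ = 12` is smaller, so the
twisted norm of `ε` has absolute value less than `1` at `w₀`.
-/

namespace NumberField.InfinitePlace

theorem smul_left_injective_of_isReal {k K : Type*} [Field k] [Field K] [Algebra k K]
    {w : InfinitePlace K} (hw : w.IsReal) :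
    Function.Injective (fun σ : K ≃ₐ[k] K => σ • w) := by
  intro σ σ' h
  have hstab : σ'⁻¹ * σ ∈ MulAction.stabilizer (K ≃ₐ[k] K) w := by
    rw [MulAction.mem_stabilizer_iff, mul_smul]
    exact inv_smul_eq_iff.mpr h
  rw [(hw.isUnramified k).stabilizer_eq_bot, Subgroup.mem_bot, inv_mul_eq_one] at hstab
  exact hstab.symm

variable {K : Type*} [Field K] [NumberField K]

theorem exists_unit_prod_pow_lt_one {ι : Type*} [Fintype ι] {w : ι → InfinitePlace K}
    (hw : Function.Injective w) {s : ι → ℕ} {i₀ i₁ : ι} (h₀ : s i₀ = 0) (h₁ : s i₁ ≠ 0) :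
    ∃ u : (𝓞 K)ˣ, ∏ i, w i (u : K) ^ s i < 1 := by
  classical
  obtain ⟨u, hu⟩ := Units.dirichletUnitTheorem.exists_unit K (w i₀)
  have hlt : ∀ i ≠ i₀, w i (u : K) < 1 := fun i hi =>
    (Real.log_neg_iff (pos_iff.mpr (by simp))).mp (hu (w i) (hw.ne hi))
  have hle : ∀ i, w i (u : K) ^ s i ≤ 1 := fun i => by
    rcases eq_or_ne i i₀ with rfl | hi
    · simp [h₀]
    · exact pow_le_one₀ (apply_nonneg _ _) (hlt i hi).le
  have hi₁ : i₁ ≠ i₀ := by rintro rfl; exact h₁ h₀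
  refine ⟨u, ?_⟩
  calc ∏ i, w i (u : K) ^ s i
      = w i₁ (u : K) ^ s i₁ * ∏ i ∈ Finset.univ.erase i₁, w i (u : K) ^ s i :=
        (Finset.mul_prod_erase _ _ (Finset.mem_univ i₁)).symm
    _ ≤ w i₁ (u : K) ^ s i₁ * 1 := by
        gcongr
        exact Finset.prod_le_one (fun i _ => pow_nonneg (apply_nonneg _ _) _) fun i _ => hle i
    _ < 1 := by
        rw [mul_one]
        exact pow_lt_one₀ (apply_nonneg _ _) (hlt i₁ hi₁) h₁

end NumberField.InfinitePlace

open NumberField.InfinitePlace in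
theorem twisted_norm_of_unit_ne_one_general
    (K : Type*) [Field K] [NumberField K]
    (htr : ∀ φ : K →+* ℂ, ComplexEmbedding.IsReal φ)
    (s : (K ≃ₐ[ℚ] K) → ℕ) (hs : ∀ τ, s τ = 0 ∨ s τ = 12)
    (hs0 : ¬ ∀ τ, s τ = 0) (hs12 : ¬ ∀ τ, s τ = 12) :
    ∃ ε : (𝓞 K)ˣ, ∏ τ : K ≃ₐ[ℚ] K, τ ((ε : 𝓞 K) : K) ^ s τ ≠ 1 := by
  obtain ⟨w₀⟩ : Nonempty (InfinitePlace K) := inferInstance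
  have hw₀ : w₀.IsReal := isReal_iff.mpr (htr _)
  obtain ⟨τ₁, hτ₁⟩ : ∃ τ, s τ = 0 := by
    obtain ⟨τ, hτ⟩ := not_forall.mp hs12
    exact ⟨τ, (hs τ).resolve_right hτ⟩
  obtain ⟨τ₂, hτ₂⟩ := not_forall.mp hs0
  obtain ⟨ε, hε⟩ := exists_unit_prod_pow_lt_one
    ((smul_left_injective_of_isReal (k := ℚ) hw₀).comp inv_injective) hτ₁ hτ₂
  refine ⟨ε, fun h => hε.ne ?_⟩
  simpa [map_prod, AlgEquiv.aut_inv] using congr_arg w₀ h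

theorem twisted_norm_of_unit_ne_one
    (K : Type*) [Field K] [NumberField K] [IsGalois ℚ K]
    (d : ℕ) (hd : 2 ≤ d) (hdeg : Module.finrank ℚ K = d)
    (htr : ∀ φ : K →+* ℂ, ComplexEmbedding.IsReal φ)
    (s : (K ≃ₐ[ℚ] K) → ℕ) (hs : ∀ τ, s τ = 0 ∨ s τ = 12)
    (hs0 : ¬ ∀ τ, s τ = 0) (hs12 : ¬ ∀ τ, s τ = 12) :
    ∃ ε : (𝓞 K)ˣ, ∏ τ : K ≃ₐ[ℚ] K, τ ((ε : 𝓞 K) : K) ^ s τ ≠ 1 :=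
  twisted_norm_of_unit_ne_one_general K htr s hs hs0 hs12
end

section
/- Let $K$ be a totally real Galois number field of degree $d \geq 2$ with Galois group $G$ and unit group basis $\epsilon_1, \ldots, \epsilon_{d-1}$ (modulo torsion). For a nonconstant tuple $\mathbf{s} \in \{0,12\}^G$, define the ideal $\mathfrak{a}_\mathbf{s} = \gcd((\mathcal{N}_\mathbf{s}(\epsilon_1) - 1)\mathcal{O}_K, \ldots, (\mathcal{N}_\mathbf{s}(\epsilon_{d-1}) - 1)\mathcal{O}_K)$ and $A_\mathbf{s} = \mathrm{Nm}(\mathfrak{a}_\mathbf{s})$. Then $A_\mathbf{s} \neq 0$. -/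
/-!
If the ideal vanishes, every `𝒩_s(εᵢ)` equals `1`, so `w (𝒩_s u) = 1` for every unit `u` and
every place `w`, since roots of unity have absolute value `1` everywhere. Conversely, fix a real
place `w`; the places `w ∘ τ`, `τ ∈ G`, are pairwise distinct. Take `σ` with `s σ` minimal and,
by Dirichlet's construction, a unit `u` with `v u < 1` at every place `v ≠ w ∘ σ`. As
`∏_τ w (τ u) = |Nm u| = 1`, we get `w (𝒩_s u) = ∏_τ w (τ u) ^ (s τ - s σ) < 1` once `s` is
nonconstant.
-/

open NumberField InfinitePlace

namespace NumberField

variable {K : Type*} [Field K] [NumberField K]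

noncomputable def twistedNorm (s : (K ≃ₐ[ℚ] K) → ℕ) : K →* K where
  toFun x := ∏ τ, τ x ^ s τ
  map_one' := by simp
  map_mul' x y := by simp only [map_mul, mul_pow, Finset.prod_mul_distrib]

theorem twistedNorm_apply (s : (K ≃ₐ[ℚ] K) → ℕ) (x : K) :
    twistedNorm s x = ∏ τ, τ x ^ s τ := rfl

theorem InfinitePlace.IsReal.comap_algEquiv_injective {w : InfinitePlace K} (hw : w.IsReal) :
    Function.Injective fun τ : K ≃ₐ[ℚ] K ↦ w.comap (τ : K →+* K) := by
  intro σ τ h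
  have hstab : τ * σ⁻¹ ∈ MulAction.stabilizer (K ≃ₐ[ℚ] K) w := by
    rw [MulAction.mem_stabilizer_iff, mul_smul]
    change τ • w.comap (σ : K →+* K) = w
    rw [show w.comap (σ : K →+* K) = w.comap (τ : K →+* K) from h]
    exact smul_inv_smul τ w
  rw [(hw.isUnramified ℚ).stabilizer_eq_bot, Subgroup.mem_bot, mul_inv_eq_one] at hstab
  exact hstab.symm

theorem InfinitePlace.prod_apply_algEquiv_unit_eq_one [IsGalois ℚ K] (w : InfinitePlace K)
    (u : (𝓞 K)ˣ) : ∏ τ : K ≃ₐ[ℚ] K, w (τ u) = 1 := by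
  rw [← map_prod, ← Algebra.norm_eq_prod_automorphisms, eq_ratCast, InfinitePlace.map_ratCast,
    ← Rat.norm_cast_real, Real.norm_eq_abs, ← Rat.cast_abs, Units.norm, Rat.cast_one]

theorem apply_twistedNorm_eq_one_of_isOfFinOrder (w : InfinitePlace K) (s : (K ≃ₐ[ℚ] K) → ℕ)
    {t : (𝓞 K)ˣ} (ht : IsOfFinOrder t) : w (twistedNorm s t) = 1 := by
  have hw : ∀ w' : InfinitePlace K, w' t = 1 :=
    (Units.mem_torsion K).mp ((CommGroup.mem_torsion t).mpr ht)
  simp only [twistedNorm_apply, map_prod, map_pow]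
  exact Finset.prod_eq_one fun τ _ ↦ by
    change (w.comap (τ : K →+* K)) t ^ s τ = 1
    rw [hw, one_pow]

theorem apply_twistedNorm_eq_one_of_generators {ι : Type*} [Fintype ι] (w : InfinitePlace K)
    (s : (K ≃ₐ[ℚ] K) → ℕ) (ε : ι → (𝓞 K)ˣ)
    (hgen : ∀ u : (𝓞 K)ˣ, ∃ (n : ι → ℤ) (t : (𝓞 K)ˣ), IsOfFinOrder t ∧ u = t * ∏ i, ε i ^ n i)
    (hε : ∀ i, twistedNorm s (ε i : K) = 1) (u : (𝓞 K)ˣ) : w (twistedNorm s u) = 1 := by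
  let f : (𝓞 K)ˣ →* ℝ := ((w : K →* ℝ).comp (twistedNorm s)).comp
    ((algebraMap (𝓞 K) K : 𝓞 K →* K).comp (Units.coeHom _))
  change u ∈ f.ker
  obtain ⟨n, t, ht, rfl⟩ := hgen u
  refine mul_mem (apply_twistedNorm_eq_one_of_isOfFinOrder w s ht)
    (prod_mem fun i _ ↦ zpow_mem ?_ _)
  change w (twistedNorm s (ε i : K)) = 1
  rw [hε, map_one]

theorem exists_unit_apply_twistedNorm_ne_one [IsGalois ℚ K] {w : InfinitePlace K}
    (hw : w.IsReal) {s : (K ≃ₐ[ℚ] K) → ℕ} (hs : ∃ σ τ, s σ ≠ s τ) :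
    ∃ u : (𝓞 K)ˣ, w (twistedNorm s u) ≠ 1 := by
  classical
  obtain ⟨σ, -, hσ⟩ := Finset.univ.exists_min_image s Finset.univ_nonempty
  obtain ⟨τ, hτ⟩ : ∃ τ, s σ < s τ := by
    obtain ⟨τ₁, τ₂, h⟩ := hs
    by_contra! hle
    exact h ((le_antisymm (hle τ₁) (hσ τ₁ (Finset.mem_univ _))).trans
      (le_antisymm (hle τ₂) (hσ τ₂ (Finset.mem_univ _))).symm)
  obtain ⟨u, hu⟩ := Units.dirichletUnitTheorem.exists_unit K (w.comap (σ : K →+* K))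
  have hlt : ∀ ρ : K ≃ₐ[ℚ] K, ρ ≠ σ → w (ρ u) < 1 := fun ρ hρ ↦
    (Real.log_neg_iff (Units.pos_at_place u _)).mp
      (hu _ fun h ↦ hρ (hw.comap_algEquiv_injective h))
  have hle : ∀ ρ : K ≃ₐ[ℚ] K, w (ρ u) ^ (s ρ - s σ) ≤ 1 := fun ρ ↦ by
    rcases eq_or_ne ρ σ with rfl | hρ
    · simp
    · exact pow_le_one₀ (apply_nonneg w _) (hlt ρ hρ).le
  refine ⟨u, ne_of_lt ?_⟩
  calc w (twistedNorm s u) = ∏ ρ : K ≃ₐ[ℚ] K, w (ρ u) ^ s ρ := by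
        simp only [twistedNorm_apply, map_prod, map_pow]
    _ = (∏ ρ : K ≃ₐ[ℚ] K, w (ρ u)) ^ s σ * ∏ ρ : K ≃ₐ[ℚ] K, w (ρ u) ^ (s ρ - s σ) := by
        rw [← Finset.prod_pow, ← Finset.prod_mul_distrib]
        refine Finset.prod_congr rfl fun ρ _ ↦ ?_
        rw [← pow_add, Nat.add_sub_cancel' (hσ ρ (Finset.mem_univ _))]
    _ = ∏ ρ : K ≃ₐ[ℚ] K, w (ρ u) ^ (s ρ - s σ) := by
        rw [prod_apply_algEquiv_unit_eq_one, one_pow, one_mul]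
    _ ≤ w (τ u) ^ (s τ - s σ) := by
        rw [← Finset.mul_prod_erase _ _ (Finset.mem_univ τ)]
        exact mul_le_of_le_one_right (by positivity)
          (Finset.prod_le_one (fun _ _ ↦ by positivity) fun ρ _ ↦ hle ρ)
    _ < 1 := pow_lt_one₀ (apply_nonneg w _) (hlt τ (ne_of_apply_ne s hτ.ne'))
      (Nat.sub_ne_zero_of_lt hτ)

end NumberField

theorem As_ne_zero_general
    (K : Type*) [Field K] [NumberField K] [IsGalois ℚ K]
    (d : ℕ)
    (htr : ∀ φ : K →+* ℂ, ComplexEmbedding.IsReal φ)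
    (ε : Fin (d - 1) → (𝓞 K)ˣ)
    -- `ε` generates the unit group modulo torsion
    (hgen : ∀ u : (𝓞 K)ˣ, ∃ (n : Fin (d - 1) → ℤ) (t : (𝓞 K)ˣ),
        IsOfFinOrder t ∧ u = t * ∏ i, ε i ^ n i)
    (s : (K ≃ₐ[ℚ] K) → ℕ) (hs : ∀ τ, s τ = 0 ∨ s τ = 12)
    (hs0 : ¬ ∀ τ, s τ = 0) (hs12 : ¬ ∀ τ, s τ = 12)
    -- `y i` is the algebraic integer `𝒩_s(ε i) - 1`
    (y : Fin (d - 1) → 𝓞 K)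
    (hy : ∀ i, ((y i : 𝓞 K) : K) = (∏ τ : K ≃ₐ[ℚ] K, τ ((ε i : 𝓞 K) : K) ^ s τ) - 1) :
    Ideal.absNorm (⨆ i, Ideal.span {y i}) ≠ 0 := by
  obtain ⟨w⟩ : Nonempty (InfinitePlace K) := inferInstance
  have hs_nonconst : ∃ σ τ, s σ ≠ s τ := by
    push Not at hs0 hs12
    obtain ⟨σ, hσ⟩ := hs0
    obtain ⟨τ, hτ⟩ := hs12
    exact ⟨σ, τ, by rcases hs σ with h | h <;> rcases hs τ with h' | h' <;> omega⟩
  obtain ⟨u, hu⟩ := exists_unit_apply_twistedNorm_ne_one (isReal_iff.mpr (htr _)) hs_nonconst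
  simp only [Ne, Ideal.absNorm_eq_zero_iff, iSup_eq_bot, Ideal.span_singleton_eq_bot]
  refine fun hy0 ↦ hu (apply_twistedNorm_eq_one_of_generators w s ε hgen (fun i ↦ ?_) u)
  rw [twistedNorm_apply, ← sub_eq_zero, ← hy i, hy0 i]
  rfl

/-- For a totally real Galois number field `K` of degree `d ≥ 2`, a system of fundamental
units `ε₁, …, ε_{d-1}` (a basis of the unit group modulo torsion) and a nonconstant
signature `s ∈ {0,12}^G`, the norm `A_s` of the ideal
`gcd((𝒩_s(ε₁)-1)𝓞_K, …, (𝒩_s(ε_{d-1})-1)𝓞_K)` is nonzero. -/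
theorem As_ne_zero
    (K : Type*) [Field K] [NumberField K] [IsGalois ℚ K]
    (d : ℕ) (hd : 2 ≤ d) (hdeg : Module.finrank ℚ K = d)
    (htr : ∀ φ : K →+* ℂ, ComplexEmbedding.IsReal φ)
    (ε : Fin (d - 1) → (𝓞 K)ˣ)
    -- `ε` generates the unit group modulo torsion
    (hgen : ∀ u : (𝓞 K)ˣ, ∃ (n : Fin (d - 1) → ℤ) (t : (𝓞 K)ˣ),
        IsOfFinOrder t ∧ u = t * ∏ i, ε i ^ n i)
    -- `ε` is independent modulo torsion
    (hind : ∀ n : Fin (d - 1) → ℤ, IsOfFinOrder (∏ i, ε i ^ n i) → n = 0)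
    (s : (K ≃ₐ[ℚ] K) → ℕ) (hs : ∀ τ, s τ = 0 ∨ s τ = 12)
    (hs0 : ¬ ∀ τ, s τ = 0) (hs12 : ¬ ∀ τ, s τ = 12)
    -- `y i` is the algebraic integer `𝒩_s(ε i) - 1`
    (y : Fin (d - 1) → 𝓞 K)
    (hy : ∀ i, ((y i : 𝓞 K) : K) = (∏ τ : K ≃ₐ[ℚ] K, τ ((ε i : 𝓞 K) : K) ^ s τ) - 1) :
    Ideal.absNorm (⨆ i, Ideal.span {y i}) ≠ 0 :=
  As_ne_zero_general K d htr ε hgen s hs hs0 hs12 y hy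
end
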